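/- Suppose for every pair of rationale candidates (Z_i, Z_j) with d(Z_i, Z_j) ≥ δ_p, the probability that Z_i and Z_j are not both informative is at most P_te. If the predictor f_P satisfies f_P(Z_i) = ε_i ≤ 1/2, f_P(Z_j) = 1 − ε_j with ε_j ≤ 1/2, and its Lipschitz constant satisfies 0 < L_c ≤ (1 − ε_j − ε_i)/δ_p with ε_i + ε_j < 1, then the probability that both Z_i and Z_j are informative rationales is at least 1 − P_te. -/

import Mathlib

theorem le_dist_of_mul_le_abs_sub {Z : Type*} [PseudoMetricSpace Z] {f : Z → ℝ} {L δ : ℝ}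
    (hf : ∀ x y, |f x - f y| ≤ L * dist x y) (hL : 0 < L) {x y : Z}
    (h : L * δ ≤ |f x - f y|) : δ ≤ dist x y :=
  le_of_mul_le_mul_left (h.trans (hf x y)) hL

theorem stmt_1_general {Z : Type*} [MetricSpace Z] (f : Z → ℝ)
    (ptilde : Z → Z → ℝ) (δp Pte Lc : ℝ) (hδp : 0 < δp)
    (hthresh : ∀ x y : Z, dist x y ≥ δp → ptilde x y ≤ Pte)
    (hlip : ∀ x y : Z, |f x - f y| ≤ Lc * dist x y)
    (Zi Zj : Z) (εi εj : ℝ)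
    (hi : f Zi = εi)
    (hj : f Zj = 1 - εj)
    (hLpos : 0 < Lc) (hLle : Lc ≤ (1 - εj - εi) / δp) :
    1 - ptilde Zi Zj ≥ 1 - Pte := by
  have hgap : Lc * δp ≤ |f Zi - f Zj| :=
    calc Lc * δp ≤ 1 - εj - εi := (le_div_iff₀ hδp).mp hLle
      _ ≤ |f Zi - f Zj| := by
        rw [hi, hj, abs_sub_comm]
        exact le_abs_self _
  exact sub_le_sub_left (hthresh Zi Zj (le_dist_of_mul_le_abs_sub hlip hLpos hgap)) 1

/-- Under the distance–informativeness threshold assumption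
(`d(x,y) ≥ δp → p̃(x,y) ≤ Pte`), if the predictor is `Lc`-Lipschitz with
`0 < Lc ≤ (1 - εj - εi)/δp`, makes predictions `f Zi = εi ≤ 1/2`,
`f Zj = 1 - εj` with `εj ≤ 1/2` and `εi + εj < 1`, then the probability
`p(Zi,Zj) = 1 - p̃(Zi,Zj)` that both are informative is at least `1 - Pte`. -/
theorem stmt_1 {Z : Type*} [MetricSpace Z] (f : Z → ℝ)
    (ptilde : Z → Z → ℝ) (δp Pte Lc : ℝ) (hδp : 0 < δp)
    (hthresh : ∀ x y : Z, dist x y ≥ δp → ptilde x y ≤ Pte)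
    (hlip : ∀ x y : Z, |f x - f y| ≤ Lc * dist x y)
    (Zi Zj : Z) (εi εj : ℝ)
    (hi : f Zi = εi) (hεi : εi ≤ 1/2)
    (hj : f Zj = 1 - εj) (hεj : εj ≤ 1/2)
    (hsum : εi + εj < 1)
    (hLpos : 0 < Lc) (hLle : Lc ≤ (1 - εj - εi) / δp) :
    1 - ptilde Zi Zj ≥ 1 - Pte :=
  stmt_1_general f ptilde δp Pte Lc hδp hthresh hlip Zi Zj εi εj hi hj hLpos hLle
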